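/- (Gershgorin Circle Theorem over 𝒞.) Let A = (a_{ij}) be an n×n matrix over 𝒞, let ν ∈ 𝒞, and let v ∈ 𝒞ⁿ with v ≠ 0 and A·v = ν·v. Suppose for every pair i ≠ k there is r_{ik} ∈ ℛ with r_{ik} ⪰ 0 and r_{ik}² = conj(a_{ik})·a_{ik} (so r_{ik} = |a_{ik}|), and for every i there is c_i ∈ ℛ with c_i ⪰ 0 and c_i² = conj(a_{ii} − ν)·(a_{ii} − ν) (so c_i = |ν − a_{ii}|). Then there exists an index i such that c_i ⪯ Σ_{k ≠ i} r_{ik}. -/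

import Mathlib

open Pointwise

noncomputable section

/-- A set of rational numbers is *left-finite* if below every rational number
it has only finitely many elements. -/
def LeftFinite (A : Set ℚ) : Prop := ∀ r : ℚ, {q ∈ A | q < r}.Finite

theorem LeftFinite.mono {A B : Set ℚ} (h : LeftFinite B) (hAB : A ⊆ B) : LeftFinite A :=
  fun r => (h r).subset fun _ hq => ⟨hAB hq.1, hq.2⟩

theorem LeftFinite.union {A B : Set ℚ} (hA : LeftFinite A) (hB : LeftFinite B) :
    LeftFinite (A ∪ B) := by
  intro r
  have hsub : {q ∈ A ∪ B | q < r} ⊆ {q ∈ A | q < r} ∪ {q ∈ B | q < r} := by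
    rintro q ⟨hq | hq, hr⟩
    · exact Or.inl ⟨hq, hr⟩
    · exact Or.inr ⟨hq, hr⟩
  exact ((hA r).union (hB r)).subset hsub

theorem Set.Finite.leftFinite {A : Set ℚ} (h : A.Finite) : LeftFinite A :=
  fun _ => h.subset fun _ hq => hq.1

theorem LeftFinite.exists_lb {A : Set ℚ} (h : LeftFinite A) : ∃ m : ℚ, ∀ a ∈ A, m ≤ a := by
  rcases A.eq_empty_or_nonempty with rfl | ⟨a₀, ha₀⟩
  · exact ⟨0, by simp⟩
  · obtain ⟨m, hm⟩ := (h a₀).bddBelow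
    refine ⟨min m a₀, fun a ha => ?_⟩
    rcases lt_or_ge a a₀ with hlt | hle
    · exact le_trans (min_le_left _ _) (hm ⟨ha, hlt⟩)
    · exact le_trans (min_le_right _ _) hle

theorem LeftFinite.addSet {A B : Set ℚ} (hA : LeftFinite A) (hB : LeftFinite B) :
    LeftFinite (A + B) := by
  obtain ⟨mA, hmA⟩ := hA.exists_lb
  obtain ⟨mB, hmB⟩ := hB.exists_lb
  intro r
  apply Set.Finite.subset (((hA (r - mB)).prod (hB (r - mA))).image fun p : ℚ × ℚ => p.1 + p.2)
  rintro q ⟨hq, hqr⟩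
  rw [Set.mem_add] at hq
  obtain ⟨a, ha, b, hb, rfl⟩ := hq
  exact ⟨(a, b), ⟨⟨ha, by linarith [hmB b hb]⟩, hb, by linarith [hmA a ha]⟩, rfl⟩

/-- The Levi-Civita field over a coefficient ring `K`, realized as the subring of
Hahn series over `ℚ` consisting of those series with left-finite support.
(An element is a function `ℚ → K` with left-finite support; addition is pointwise
and multiplication is convolution.) -/
def LeviCivitaField (K : Type) [CommRing K] : Subring (HahnSeries ℚ K) where
  carrier := {x | LeftFinite x.support}
  zero_mem' := by
    have h : (0 : HahnSeries ℚ K).support = (∅ : Set ℚ) := HahnSeries.support_zero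
    exact Set.Finite.leftFinite (by rw [h]; exact Set.finite_empty)
  one_mem' := by
    refine Set.Finite.leftFinite ((Set.finite_singleton (0 : ℚ)).subset ?_)
    intro q hq
    by_contra hq0
    have hq0' : q ≠ 0 := by simpa using hq0
    have : (1 : HahnSeries ℚ K).coeff q = 0 := by
      rw [HahnSeries.coeff_one, if_neg hq0']
    exact hq this
  add_mem' := fun {x y} hx hy =>
    LeftFinite.mono (LeftFinite.union hx hy) (HahnSeries.support_add_subset _ _)
  neg_mem' := fun {x} hx => LeftFinite.mono hx (le_of_eq HahnSeries.support_neg)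
  mul_mem' := fun {x y} hx hy =>
    LeftFinite.mono (LeftFinite.addSet hx hy) HahnSeries.support_mul_subset

namespace LeviCivitaField

variable {K : Type} [CommRing K]

/-- The coefficient `a[q]` of an element of the Levi-Civita field. -/
def coeff (x : LeviCivitaField K) (q : ℚ) : K := (x : HahnSeries ℚ K).coeff q

/-- The support `supp a` of an element of the Levi-Civita field. -/
def supp (x : LeviCivitaField K) : Set ℚ := (x : HahnSeries ℚ K).support

theorem leftFinite_supp (x : LeviCivitaField K) : LeftFinite (supp x) := x.2

/-- `λ(a)`: the minimum of the support of `a` (for nonzero `a`; `0` for `a = 0`). -/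
def lam (x : LeviCivitaField K) : ℚ := (x : HahnSeries ℚ K).order

/-- `a` is at most finite if `a[q] = 0` for all `q < 0`. -/
def AtMostFinite (x : LeviCivitaField K) : Prop := ∀ q : ℚ, q < 0 → coeff x q = 0

/-- A sequence is regular if the union of the supports of its elements is left-finite. -/
def Regular (a : ℕ → LeviCivitaField K) : Prop := LeftFinite (⋃ n, supp (a n))

/-- The seminorm `‖a‖_r = max {|a[q]| : q ≤ r, a[q] ≠ 0}` (equal to `0` if no such `q` exists). -/
def wnorm [Norm K] (x : LeviCivitaField K) (r : ℝ) : ℝ :=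
  sSup ((fun q : ℚ => ‖coeff x q‖) '' {q : ℚ | (q : ℝ) ≤ r ∧ coeff x q ≠ 0})

/-- Weak convergence: `a_n →wk l` iff for every real `r > 0` there is `N` with
`‖a_n − l‖_{1/r} < r` for all `n > N`. -/
def WeakTendsto [Norm K] (a : ℕ → LeviCivitaField K) (l : LeviCivitaField K) : Prop :=
  ∀ r : ℝ, 0 < r → ∃ N : ℕ, ∀ n : ℕ, n > N → wnorm (a n - l) (1 / r) < r

/-- Positivity on the real Levi-Civita field: `x ≻ 0` iff `x ≠ 0` and `x[λ(x)] > 0`. -/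
def Pos (x : LeviCivitaField ℝ) : Prop := x ≠ 0 ∧ 0 < coeff x (lam x)

/-- `x ⪰ 0` on the real Levi-Civita field. -/
def Nonneg (x : LeviCivitaField ℝ) : Prop := x = 0 ∨ Pos x

/-- `x ⪯ y` on the real Levi-Civita field. -/
def Le (x y : LeviCivitaField ℝ) : Prop := Nonneg (y - x)

/-- An element of the complex Levi-Civita field is *real* if all its coefficients are real;
this identifies `ℛ` with the subring `{z ∈ 𝒞 : z[q] ∈ ℝ for all q}` of `𝒞`. -/
def IsReal (x : LeviCivitaField ℂ) : Prop := ∀ q : ℚ, (coeff x q).im = 0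

/-- `x ≻ 0` for elements of `ℛ` viewed inside `𝒞`: `x` is real, nonzero,
and its leading coefficient is positive. -/
def PosC (x : LeviCivitaField ℂ) : Prop := IsReal x ∧ x ≠ 0 ∧ 0 < (coeff x (lam x)).re

/-- `x ⪰ 0` for elements of `ℛ` viewed inside `𝒞`. -/
def NonnegC (x : LeviCivitaField ℂ) : Prop := x = 0 ∨ PosC x

/-- `x ⪯ y` for elements of `ℛ` viewed inside `𝒞`. -/
def LeC (x y : LeviCivitaField ℂ) : Prop := NonnegC (y - x)

/-- `x ≺ y` for elements of `ℛ` viewed inside `𝒞`. -/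
def LtC (x y : LeviCivitaField ℂ) : Prop := PosC (y - x)

/-- Conjugation on the complex Levi-Civita field: `conj(z)[q] = conj (z[q])`. -/
def conj (x : LeviCivitaField ℂ) : LeviCivitaField ℂ :=
  ⟨⟨fun q => starRingEnd ℂ (coeff x q),
    (x : HahnSeries ℚ ℂ).isPWO_support.mono (fun q hq => by
      simp only [Function.mem_support, ne_eq, map_eq_zero] at hq
      exact hq)⟩,
   LeftFinite.mono x.2 (fun q hq => by
      have hq' : starRingEnd ℂ (coeff x q) ≠ 0 := hq
      have : coeff x q ≠ 0 := fun h => hq' (by rw [h, map_zero])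
      exact this)⟩

/-- The monomial `d^q`: the element supported at `{q}` with value `1`. -/
def dpow (q : ℚ) : LeviCivitaField ℂ :=
  ⟨HahnSeries.single q (1 : ℂ),
    Set.Finite.leftFinite ((Set.finite_singleton q).subset HahnSeries.support_single_subset)⟩

end LeviCivitaField


open LeviCivitaField

namespace LCAux
open LeviCivitaField
local notation "L" => LeviCivitaField ℂ

theorem coeff_val (x : L) (q : ℚ) : coeff x q = (x : HahnSeries ℚ ℂ).coeff q := rfl

theorem lc_ext {x y : L} (h : ∀ q, coeff x q = coeff y q) : x = y :=
  Subtype.ext (HahnSeries.coeff_injective (funext h))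

theorem ne_zero_iff {x : L} : x ≠ 0 ↔ (x : HahnSeries ℚ ℂ) ≠ 0 := by
  simp [ne_eq, ZeroMemClass.coe_eq_zero]

theorem coeff_zero (q : ℚ) : coeff (0 : L) q = 0 := rfl
theorem coeff_add (x y : L) (q : ℚ) : coeff (x + y) q = coeff x q + coeff y q := rfl
theorem coeff_neg (x : L) (q : ℚ) : coeff (-x) q = -coeff x q := rfl
theorem coeff_sub (x y : L) (q : ℚ) : coeff (x - y) q = coeff x q - coeff y q := by
  rw [sub_eq_add_neg, coeff_add, coeff_neg, sub_eq_add_neg]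

theorem coeff_lam_ne_zero {x : L} (hx : x ≠ 0) : coeff x (lam x) ≠ 0 :=
  HahnSeries.coeff_order_eq_zero.not.mpr (ne_zero_iff.mp hx)

theorem coeff_eq_zero_of_lt_lam {x : L} {q : ℚ} (h : q < lam x) : coeff x q = 0 :=
  HahnSeries.coeff_eq_zero_of_lt_order h

theorem lam_eq {x : L} {m : ℚ} (h1 : coeff x m ≠ 0) (h2 : ∀ q < m, coeff x q = 0) :
    lam x = m := by
  have hle : lam x ≤ m := HahnSeries.order_le_of_coeff_ne_zero h1
  rcases lt_or_eq_of_le hle with hlt | he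
  · exact absurd (h2 _ hlt) (coeff_lam_ne_zero (by
      intro h0; apply h1; rw [h0]; rfl))
  · exact he

theorem lam_neg (x : L) : lam (-x) = lam x := HahnSeries.order_neg

end LCAux
namespace LCAux
local notation "L" => LeviCivitaField ℂ
theorem coeff_conj (x : L) (q : ℚ) : coeff (conj x) q = starRingEnd ℂ (coeff x q) := rfl

theorem conj_val (x : L) :
    (conj x : HahnSeries ℚ ℂ) = (x : HahnSeries ℚ ℂ).map (starRingEnd ℂ).toNonUnitalRingHom :=
  HahnSeries.coeff_injective rfl

theorem conj_mul' (x y : L) : conj (x * y) = conj x * conj y := by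
  apply Subtype.ext
  rw [conj_val, Subring.coe_mul, Subring.coe_mul, conj_val, conj_val, HahnSeries.map_mul]

theorem conj_add' (x y : L) : conj (x + y) = conj x + conj y := by
  apply lc_ext; intro q
  rw [coeff_conj, coeff_add, coeff_add, coeff_conj, coeff_conj, map_add]

theorem conj_neg' (x : L) : conj (-x) = -conj x := by
  apply lc_ext; intro q
  rw [coeff_conj, coeff_neg, coeff_neg, coeff_conj, map_neg]

theorem conj_sub' (x y : L) : conj (x - y) = conj x - conj y := by
  rw [sub_eq_add_neg, conj_add', conj_neg', sub_eq_add_neg]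

theorem conj_conj' (x : L) : conj (conj x) = x := by
  apply lc_ext; intro q
  rw [coeff_conj, coeff_conj, Complex.conj_conj]

theorem conj_zero' : conj (0 : L) = 0 := by
  apply lc_ext; intro q; rw [coeff_conj, coeff_zero, map_zero]

theorem conj_sum' {ι : Type*} (s : Finset ι) (f : ι → L) :
    conj (∑ k ∈ s, f k) = ∑ k ∈ s, conj (f k) := by
  classical
  induction s using Finset.induction with
  | empty => simpa using conj_zero'
  | insert _ _ h ih => rw [Finset.sum_insert h, Finset.sum_insert h, conj_add', ih]

theorem isReal_iff {x : L} : IsReal x ↔ conj x = x := by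
  constructor
  · intro h; apply lc_ext; intro q
    rw [coeff_conj, Complex.conj_eq_iff_im.mpr (h q)]
  · intro h q
    rw [← Complex.conj_eq_iff_im, ← coeff_conj, h]

theorem conj_ne_zero {x : L} (hx : x ≠ 0) : conj x ≠ 0 := by
  intro h; apply hx
  rw [← conj_conj' x, h, conj_zero']

theorem lam_conj (x : L) : lam (conj x) = lam x := by
  rcases eq_or_ne x 0 with rfl | hx
  · rw [conj_zero']
  · apply lam_eq
    · rw [coeff_conj]; simpa using coeff_lam_ne_zero hx
    · intro q hq; rw [coeff_conj, coeff_eq_zero_of_lt_lam hq, map_zero]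

theorem leading_eq {x : L} (hx : x ≠ 0) :
    (x : HahnSeries ℚ ℂ).leadingCoeff = coeff x (lam x) := by
  have h' := ne_zero_iff.mp hx
  rw [HahnSeries.leadingCoeff_eq, coeff_val]
  rfl

theorem mul_ne_zero' {x y : L} (hx : x ≠ 0) (hy : y ≠ 0) : x * y ≠ 0 := by
  rw [ne_zero_iff] at *
  rw [Subring.coe_mul]
  exact mul_ne_zero hx hy

theorem lam_mul {x y : L} (hx : x ≠ 0) (hy : y ≠ 0) : lam (x * y) = lam x + lam y := by
  show (((x * y) : L) : HahnSeries ℚ ℂ).order = _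
  rw [Subring.coe_mul]
  exact HahnSeries.order_mul (ne_zero_iff.mp hx) (ne_zero_iff.mp hy)

theorem coeff_mul_lam (x y : L) :
    coeff (x * y) (lam x + lam y) = coeff x (lam x) * coeff y (lam y) := by
  rcases eq_or_ne x 0 with rfl | hx
  · simp [coeff_zero, zero_mul, coeff_val]
  rcases eq_or_ne y 0 with rfl | hy
  · simp [coeff_zero, mul_zero, coeff_val]
  have := HahnSeries.coeff_mul_order_add_order (x : HahnSeries ℚ ℂ) (y : HahnSeries ℚ ℂ)
  rw [leading_eq hx, leading_eq hy] at this
  rw [coeff_val, Subring.coe_mul]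
  exact this
end LCAux
namespace LCAux
local notation "L" => LeviCivitaField ℂ

theorem nonnegC_isReal {x : L} (h : NonnegC x) : IsReal x := by
  rcases h with rfl | h
  · intro q; rw [coeff_zero]; rfl
  · exact h.1

theorem isReal_neg {x : L} (h : IsReal x) : IsReal (-x) := by
  rw [isReal_iff] at *
  rw [conj_neg', h]

theorem isReal_sub {x y : L} (hx : IsReal x) (hy : IsReal y) : IsReal (x - y) := by
  rw [isReal_iff] at *
  rw [conj_sub', hx, hy]

/-- Trichotomy for real elements. -/
theorem isReal_nonneg_or_negpos {x : L} (h : IsReal x) : NonnegC x ∨ PosC (-x) := by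
  rcases eq_or_ne x 0 with rfl | hx
  · exact Or.inl (Or.inl rfl)
  · have hc := coeff_lam_ne_zero hx
    have him : (coeff x (lam x)).im = 0 := h _
    have hre : (coeff x (lam x)).re ≠ 0 := by
      intro h0; exact hc (Complex.ext h0 him)
    rcases lt_or_gt_of_ne hre with hneg | hpos
    · refine Or.inr ⟨isReal_neg h, neg_ne_zero.mpr hx, ?_⟩
      rw [lam_neg, coeff_neg, Complex.neg_re]
      linarith
    · exact Or.inl (Or.inr ⟨h, hx, hpos⟩)

theorem not_posC_and_posC_neg {x : L} (h : PosC x) (h' : PosC (-x)) : False := by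
  have h1 := h.2.2
  have h2 := h'.2.2
  rw [lam_neg, coeff_neg, Complex.neg_re] at h2
  linarith

theorem not_posC_and_nonnegC_neg {x : L} (h : PosC x) (h' : NonnegC (-x)) : False := by
  rcases h' with h0 | h'
  · exact h.2.1 (by rwa [neg_eq_zero] at h0)
  · exact not_posC_and_posC_neg h h'

theorem posC_add_posC {x y : L} (hx : PosC x) (hy : PosC y) : PosC (x + y) := by
  obtain ⟨hxr, hx0, hxp⟩ := hx
  obtain ⟨hyr, hy0, hyp⟩ := hy
  set m := min (lam x) (lam y) with hm
  have hmx : m ≤ lam x := by rw [hm]; exact min_le_left _ _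
  have hmy : m ≤ lam y := by rw [hm]; exact min_le_right _ _
  have hcx : (coeff x m).im = 0 := hxr m
  have hcy : (coeff y m).im = 0 := hyr m
  have hxge : 0 ≤ (coeff x m).re := by
    rcases eq_or_lt_of_le hmx with he | hlt
    · rw [he]; exact le_of_lt hxp
    · rw [coeff_eq_zero_of_lt_lam hlt]; simp
  have hyge : 0 ≤ (coeff y m).re := by
    rcases eq_or_lt_of_le hmy with he | hlt
    · rw [he]; exact le_of_lt hyp
    · rw [coeff_eq_zero_of_lt_lam hlt]; simp
  have hpos : 0 < (coeff (x + y) m).re := by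
    rw [coeff_add, Complex.add_re]
    rcases min_choice (lam x) (lam y) with h1 | h1
    · have : 0 < (coeff x m).re := by rw [hm, h1]; exact hxp
      linarith
    · have : 0 < (coeff y m).re := by rw [hm, h1]; exact hyp
      linarith
  have hne : coeff (x + y) m ≠ 0 := by
    intro h0; rw [h0] at hpos; simp at hpos
  have hlow : ∀ q < m, coeff (x + y) q = 0 := by
    intro q hq
    rw [coeff_add, coeff_eq_zero_of_lt_lam (lt_of_lt_of_le hq hmx),
      coeff_eq_zero_of_lt_lam (lt_of_lt_of_le hq hmy), add_zero]
  have hlam : lam (x + y) = m := lam_eq hne hlow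
  refine ⟨?_, ?_, ?_⟩
  · intro q; rw [coeff_add, Complex.add_im, hxr q, hyr q, add_zero]
  · intro h0; apply hne; rw [h0]; rfl
  · rw [hlam]; exact hpos

theorem posC_add_nonnegC {x y : L} (hx : PosC x) (hy : NonnegC y) : PosC (x + y) := by
  rcases hy with rfl | hy
  · rwa [add_zero]
  · exact posC_add_posC hx hy

theorem nonnegC_add {x y : L} (hx : NonnegC x) (hy : NonnegC y) : NonnegC (x + y) := by
  rcases hx with rfl | hx
  · rwa [zero_add]
  · exact Or.inr (posC_add_nonnegC hx hy)

theorem isReal_mul {x y : L} (hx : IsReal x) (hy : IsReal y) : IsReal (x * y) := by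
  rw [isReal_iff] at *
  rw [conj_mul', hx, hy]

theorem posC_mul {x y : L} (hx : PosC x) (hy : PosC y) : PosC (x * y) := by
  obtain ⟨hxr, hx0, hxp⟩ := hx
  obtain ⟨hyr, hy0, hyp⟩ := hy
  refine ⟨isReal_mul hxr hyr, mul_ne_zero' hx0 hy0, ?_⟩
  rw [lam_mul hx0 hy0, coeff_mul_lam, Complex.mul_re, hxr, hyr, mul_zero, sub_zero]
  exact mul_pos hxp hyp

theorem nonnegC_mul {x y : L} (hx : NonnegC x) (hy : NonnegC y) : NonnegC (x * y) := by
  rcases hx with rfl | hx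
  · rw [zero_mul]; exact Or.inl rfl
  rcases hy with rfl | hy
  · rw [mul_zero]; exact Or.inl rfl
  exact Or.inr (posC_mul hx hy)

theorem posC_conj_mul_self {z : L} (hz : z ≠ 0) : PosC (conj z * z) := by
  have hreal : IsReal (conj z * z) := by
    rw [isReal_iff, conj_mul', conj_conj', mul_comm]
  have hcz : conj z ≠ 0 := conj_ne_zero hz
  refine ⟨hreal, mul_ne_zero' hcz hz, ?_⟩
  rw [lam_mul hcz hz, coeff_mul_lam, lam_conj, coeff_conj]
  have : (starRingEnd ℂ) (coeff z (lam z)) * coeff z (lam z) = Complex.normSq (coeff z (lam z)) := by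
    rw [mul_comm, Complex.mul_conj]
  rw [this, Complex.ofReal_re]
  exact Complex.normSq_pos.mpr (coeff_lam_ne_zero hz)

theorem nonnegC_conj_mul_self (z : L) : NonnegC (conj z * z) := by
  rcases eq_or_ne z 0 with rfl | hz
  · rw [mul_zero]; exact Or.inl rfl
  · exact Or.inr (posC_conj_mul_self hz)

theorem eq_zero_of_conj_mul_self {z : L} (h : conj z * z = 0) : z = 0 := by
  by_contra hz
  exact (posC_conj_mul_self hz).2.1 h

/-- Positive · real ⪰ 0 implies real ⪰ 0. -/
theorem nonnegC_of_posC_mul {p x : L} (hp : PosC p) (hx : IsReal x)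
    (h : NonnegC (p * x)) : NonnegC x := by
  rcases isReal_nonneg_or_negpos hx with h' | h'
  · exact h'
  · exfalso
    have : PosC (p * -x) := posC_mul hp h'
    rw [mul_neg] at this
    exact not_posC_and_nonnegC_neg this (by rwa [neg_neg])

theorem posC_one : PosC (1 : L) := by
  have h1 : coeff (1 : L) 0 = 1 := by
    rw [coeff_val, OneMemClass.coe_one]
    simp [HahnSeries.coeff_one]
  have hne : (1 : L) ≠ 0 := by
    intro h0
    rw [h0, coeff_zero] at h1
    exact one_ne_zero h1.symm
  have hlam : lam (1 : L) = 0 := by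
    apply lam_eq (by rw [h1]; exact one_ne_zero)
    intro q hq
    rw [coeff_val, OneMemClass.coe_one, HahnSeries.coeff_one, if_neg (ne_of_lt hq)]
  refine ⟨?_, hne, ?_⟩
  · intro q
    rw [coeff_val, OneMemClass.coe_one, HahnSeries.coeff_one]
    split <;> simp
  · rw [hlam, h1]; simp

theorem posC_two : PosC (2 : L) := by
  have : (2 : L) = 1 + 1 := by norm_num
  rw [this]
  exact posC_add_posC posC_one posC_one

theorem nonnegC_sum {ι : Type*} (s : Finset ι) (f : ι → L)
    (h : ∀ i ∈ s, NonnegC (f i)) : NonnegC (∑ i ∈ s, f i) := by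
  classical
  induction s using Finset.induction with
  | empty => rw [Finset.sum_empty]; exact Or.inl rfl
  | @insert a s ha ih =>
    rw [Finset.sum_insert ha]
    exact nonnegC_add (h a (Finset.mem_insert_self a s))
      (ih fun i hi => h i (Finset.mem_insert_of_mem hi))

theorem leC_total {x y : L} (hx : IsReal x) (hy : IsReal y) : LeC x y ∨ LeC y x := by
  rcases isReal_nonneg_or_negpos (isReal_sub hy hx) with h | h
  · exact Or.inl h
  · right
    rw [neg_sub] at h
    exact Or.inr h

theorem leC_trans {x y z : L} (h1 : LeC x y) (h2 : LeC y z) : LeC x z := by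
  have := nonnegC_add h2 h1
  rwa [sub_add_sub_cancel] at this

theorem leC_refl (x : L) : LeC x x := by
  rw [LeC, sub_self]; exact Or.inl rfl

end LCAux
namespace LCAux
local notation "L" => LeviCivitaField ℂ

theorem exists_max_finset {ι : Type*} (f : ι → L) (s : Finset ι) :
    s.Nonempty → (∀ i ∈ s, IsReal (f i)) → ∃ i ∈ s, ∀ j ∈ s, LeC (f j) (f i) := by
  classical
  induction s using Finset.induction with
  | empty => intro hs _; exact absurd hs (by simp)
  | @insert a s ha ih =>
    intro _ h
    rcases s.eq_empty_or_nonempty with rfl | hs'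
    · refine ⟨a, Finset.mem_insert_self a _, fun j hj => ?_⟩
      rcases Finset.mem_insert.mp hj with rfl | hj
      · exact leC_refl _
      · simp at hj
    · obtain ⟨i, hi, hmax⟩ := ih hs' fun j hj => h j (Finset.mem_insert_of_mem hj)
      rcases leC_total (h a (Finset.mem_insert_self a s)) (h i (Finset.mem_insert_of_mem hi))
        with hle | hle
      · refine ⟨i, Finset.mem_insert_of_mem hi, fun j hj => ?_⟩
        rcases Finset.mem_insert.mp hj with rfl | hj
        · exact hle
        · exact hmax j hj
      · refine ⟨a, Finset.mem_insert_self a s, fun j hj => ?_⟩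
        rcases Finset.mem_insert.mp hj with rfl | hj
        · exact leC_refl _
        · exact leC_trans (hmax j hj) hle

theorem leC_of_sq {a b : L} (ha : NonnegC a) (hb : NonnegC b)
    (h : NonnegC (b * b - a * a)) : LeC a b := by
  rcases isReal_nonneg_or_negpos (isReal_sub (nonnegC_isReal hb) (nonnegC_isReal ha))
    with h' | h'
  · exact h'
  · exfalso
    rw [neg_sub] at h'
    have hab : PosC (a + b) := by
      have he : a + b = a - b + b + b := by ring
      rw [he]
      exact posC_add_nonnegC (posC_add_nonnegC h' hb) hb
    have hm : PosC ((a - b) * (a + b)) := posC_mul h' hab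
    have heq : (a - b) * (a + b) = -(b * b - a * a) := by ring
    rw [heq] at hm
    exact not_posC_and_nonnegC_neg hm (by rwa [neg_neg])

/-- The key pairwise Cauchy-Schwarz-type inequality. -/
theorem pair_nonneg {ρk ρl ak al vk vl : L} (hρk : NonnegC ρk) (hρl : NonnegC ρl)
    (hk : ρk * ρk = conj ak * ak) (hl : ρl * ρl = conj al * al) :
    NonnegC ((ρk * ρl * (conj vk * vk) + ρk * ρl * (conj vl * vl))
      - (conj (ak * vk) * (al * vl) + conj (al * vl) * (ak * vk))) := by
  set X := (ρk * ρl * (conj vk * vk) + ρk * ρl * (conj vl * vl))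
      - (conj (ak * vk) * (al * vl) + conj (al * vl) * (ak * vk)) with hXdef
  rcases hρk with h0 | hρk
  · have hak : ak = 0 := by
      apply eq_zero_of_conj_mul_self
      rw [← hk, h0, mul_zero]
    have hz : X = 0 := by
      rw [hXdef, h0, hak]; simp only [conj_mul', conj_zero']; ring
    rw [hz]; exact Or.inl rfl
  rcases hρl with h0 | hρl
  · have hal : al = 0 := by
      apply eq_zero_of_conj_mul_self
      rw [← hl, h0, mul_zero]
    have hz : X = 0 := by
      rw [hXdef, h0, hal]; simp only [conj_mul', conj_zero']; ring
    rw [hz]; exact Or.inl rfl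
  · have hρkfix : conj ρk = ρk := isReal_iff.mp hρk.1
    have hρlfix : conj ρl = ρl := isReal_iff.mp hρl.1
    have key : (ρk * ρl) * X =
        conj (ρl * (ak * vk) - ρk * (al * vl)) * (ρl * (ak * vk) - ρk * (al * vl)) := by
      rw [hXdef]
      simp only [conj_sub', conj_mul', hρkfix, hρlfix]
      linear_combination (ρl * ρl * (conj vk * vk)) * hk + (ρk * ρk * (conj vl * vl)) * hl
    have hXreal : IsReal X := by
      rw [isReal_iff, hXdef]
      simp only [conj_sub', conj_add', conj_mul', conj_conj', hρkfix, hρlfix]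
      ring
    have hnn : NonnegC ((ρk * ρl) * X) := by
      rw [key]; exact nonnegC_conj_mul_self _
    exact nonnegC_of_posC_mul (posC_mul hρk hρl) hXreal hnn

end LCAux
open LCAux in
set_option maxHeartbeats 1000000 in
/-- Gershgorin circle theorem over `𝒞`: every eigenvalue `ν` of `A`
satisfies `|ν − a_{ii}| ⪯ Σ_{k ≠ i} |a_{ik}|` for some `i`. -/
theorem gershgorin (n : ℕ) (A : Matrix (Fin n) (Fin n) (LeviCivitaField ℂ))
    (ν : LeviCivitaField ℂ) (v : Fin n → LeviCivitaField ℂ)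
    (hv : v ≠ 0) (hEig : ∀ i, A.mulVec v i = ν * v i)
    (r : Fin n → Fin n → LeviCivitaField ℂ)
    (hrnn : ∀ i k, i ≠ k → NonnegC (r i k))
    (hrsq : ∀ i k, i ≠ k → r i k * r i k = conj (A i k) * A i k)
    (c : Fin n → LeviCivitaField ℂ)
    (hcnn : ∀ i, NonnegC (c i))
    (hcsq : ∀ i, c i * c i = conj (A i i - ν) * (A i i - ν)) :
    ∃ i, LeC (c i) (∑ k ∈ Finset.univ.erase i, r i k) := by
  classical
  obtain ⟨k0, hk0⟩ : ∃ k, v k ≠ 0 := by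
    by_contra hno
    push_neg at hno
    exact hv (funext fun k => hno k)
  -- choose i maximizing |v i|²
  obtain ⟨i, -, hmax0⟩ := exists_max_finset (fun k => conj (v k) * v k) Finset.univ
    ⟨k0, Finset.mem_univ k0⟩
    (fun j _ => nonnegC_isReal (nonnegC_conj_mul_self (v j)))
  have hmax : ∀ k, NonnegC (conj (v i) * v i - conj (v k) * v k) :=
    fun k => hmax0 k (Finset.mem_univ k)
  have hWi : PosC (conj (v i) * v i) := by
    have h0 : PosC (conj (v k0) * v k0) := posC_conj_mul_self hk0
    have h1 := posC_add_nonnegC h0 (hmax k0)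
    rwa [show conj (v k0) * v k0 + (conj (v i) * v i - conj (v k0) * v k0)
        = conj (v i) * v i from by ring] at h1
  refine ⟨i, ?_⟩
  set E := Finset.univ.erase i with hE
  have hne : ∀ k ∈ E, i ≠ k := fun k hk => (Finset.ne_of_mem_erase hk).symm
  set S := ∑ k ∈ E, r i k with hS
  clear_value E S
  have hSnn : NonnegC S := by
    rw [hS]; exact nonnegC_sum _ _ fun k hk => hrnn i k (hne k hk)
  have hSreal : IsReal S := nonnegC_isReal hSnn
  -- eigen equation: sum over k ≠ i
  have h1 : ∑ k, A i k * v k = ν * v i := hEig i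
  have h2 : A i i * v i + ∑ k ∈ E, A i k * v k = ∑ k, A i k * v k := by
    rw [hE]
    exact Finset.add_sum_erase Finset.univ (fun k => A i k * v k) (Finset.mem_univ i)
  have hu : ∑ k ∈ E, A i k * v k = (ν - A i i) * v i := by
    linear_combination h2 + h1
  -- step 4 : |(ν - a_ii) v_i|² = c_i² |v_i|²
  have hstep4 : conj ((ν - A i i) * v i) * ((ν - A i i) * v i)
      = c i * c i * (conj (v i) * v i) := by
    have h5 : conj (ν - A i i) * (ν - A i i) = c i * c i := by
      rw [hcsq i, show (ν - A i i) = -(A i i - ν) from by ring, conj_neg']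
      ring
    rw [conj_mul']
    linear_combination (conj (v i) * v i) * h5
  -- the double-sum Cauchy-Schwarz inequality
  have hpair : ∀ k ∈ E, ∀ l ∈ E, NonnegC
      ((r i k * r i l * (conj (v k) * v k) + r i k * r i l * (conj (v l) * v l))
        - (conj (A i k * v k) * (A i l * v l) + conj (A i l * v l) * (A i k * v k))) := by
    intro k hk l hl
    exact pair_nonneg (hrnn i k (hne k hk)) (hrnn i l (hne l hl))
      (hrsq i k (hne k hk)) (hrsq i l (hne l hl))
  have hsum : NonnegC (∑ k ∈ E, ∑ l ∈ E,
      ((r i k * r i l * (conj (v k) * v k) + r i k * r i l * (conj (v l) * v l))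
        - (conj (A i k * v k) * (A i l * v l) + conj (A i l * v l) * (A i k * v k)))) :=
    nonnegC_sum _ _ fun k hk => nonnegC_sum _ _ fun l hl => hpair k hk l hl
  -- identify the double sum with 2 * (S * Σ ρ W - conj u * u)
  have hcu : conj (∑ k ∈ E, A i k * v k) = ∑ k ∈ E, conj (A i k * v k) := conj_sum' _ _
  have hswap : (∑ k ∈ E, ∑ l ∈ E,
        (r i k * r i l * (conj (v k) * v k) - conj (A i l * v l) * (A i k * v k)))
      = ∑ k ∈ E, ∑ l ∈ E,
        (r i k * r i l * (conj (v l) * v l) - conj (A i k * v k) * (A i l * v l)) := by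
    rw [Finset.sum_comm]
    exact Finset.sum_congr rfl fun k _ => Finset.sum_congr rfl fun l _ => by ring
  have hRHS : S * (∑ l ∈ E, r i l * (conj (v l) * v l))
      - conj (∑ k ∈ E, A i k * v k) * (∑ l ∈ E, A i l * v l)
      = ∑ k ∈ E, ∑ l ∈ E,
        (r i k * r i l * (conj (v l) * v l) - conj (A i k * v k) * (A i l * v l)) := by
    rw [hcu, hS, Finset.sum_mul_sum, Finset.sum_mul_sum, ← Finset.sum_sub_distrib]
    exact Finset.sum_congr rfl fun k _ => by
      rw [← Finset.sum_sub_distrib]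
      exact Finset.sum_congr rfl fun l _ => by ring
  have hdouble : (∑ k ∈ E, ∑ l ∈ E,
      ((r i k * r i l * (conj (v k) * v k) + r i k * r i l * (conj (v l) * v l))
        - (conj (A i k * v k) * (A i l * v l) + conj (A i l * v l) * (A i k * v k))))
      = 2 * (S * (∑ l ∈ E, r i l * (conj (v l) * v l))
          - conj (∑ k ∈ E, A i k * v k) * (∑ l ∈ E, A i l * v l)) := by
    rw [hRHS]
    have hterm : ∀ k ∈ E, ∀ l ∈ E,
        ((r i k * r i l * (conj (v k) * v k) + r i k * r i l * (conj (v l) * v l))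
          - (conj (A i k * v k) * (A i l * v l) + conj (A i l * v l) * (A i k * v k)))
        = (r i k * r i l * (conj (v l) * v l) - conj (A i k * v k) * (A i l * v l))
          + (r i k * r i l * (conj (v k) * v k) - conj (A i l * v l) * (A i k * v k)) := by
      intro k _ l _; ring
    calc (∑ k ∈ E, ∑ l ∈ E,
        ((r i k * r i l * (conj (v k) * v k) + r i k * r i l * (conj (v l) * v l))
          - (conj (A i k * v k) * (A i l * v l) + conj (A i l * v l) * (A i k * v k))))
        = ∑ k ∈ E, ∑ l ∈ E,
          ((r i k * r i l * (conj (v l) * v l) - conj (A i k * v k) * (A i l * v l))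
            + (r i k * r i l * (conj (v k) * v k) - conj (A i l * v l) * (A i k * v k))) :=
          Finset.sum_congr rfl fun k hk => Finset.sum_congr rfl fun l hl => hterm k hk l hl
      _ = (∑ k ∈ E, ∑ l ∈ E,
            (r i k * r i l * (conj (v l) * v l) - conj (A i k * v k) * (A i l * v l)))
          + ∑ k ∈ E, ∑ l ∈ E,
            (r i k * r i l * (conj (v k) * v k) - conj (A i l * v l) * (A i k * v k)) := by
          simp only [Finset.sum_add_distrib]
      _ = 2 * ∑ k ∈ E, ∑ l ∈ E,
            (r i k * r i l * (conj (v l) * v l) - conj (A i k * v k) * (A i l * v l)) := by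
          rw [hswap]; ring
  rw [hdouble] at hsum
  -- the big difference is real
  have hDreal : IsReal (S * (∑ l ∈ E, r i l * (conj (v l) * v l))
      - conj (∑ k ∈ E, A i k * v k) * (∑ l ∈ E, A i l * v l)) := by
    rw [isReal_iff, conj_sub', conj_mul', conj_mul', conj_conj']
    have hfix2 : conj S = S := isReal_iff.mp hSreal
    have hfix3 : conj (∑ l ∈ E, r i l * (conj (v l) * v l))
        = ∑ l ∈ E, r i l * (conj (v l) * v l) := by
      rw [conj_sum']
      exact Finset.sum_congr rfl fun l hl => by
        rw [conj_mul', conj_mul', conj_conj',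
          isReal_iff.mp (nonnegC_isReal (hrnn i l (hne l hl)))]
        ring
    rw [hfix2, hfix3]
    ring
  have hD : NonnegC (S * (∑ l ∈ E, r i l * (conj (v l) * v l))
      - conj (∑ k ∈ E, A i k * v k) * (∑ l ∈ E, A i l * v l)) :=
    nonnegC_of_posC_mul posC_two hDreal hsum
  -- step 3 : S * Σ ρ W ⪯ S * S * W i
  have hstep3s : NonnegC (∑ l ∈ E, r i l * (conj (v i) * v i - conj (v l) * v l)) :=
    nonnegC_sum _ _ fun l hl => nonnegC_mul (hrnn i l (hne l hl)) (hmax l)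
  have hstep3 : NonnegC (S * S * (conj (v i) * v i)
      - S * (∑ l ∈ E, r i l * (conj (v l) * v l))) := by
    have h3 := nonnegC_mul hSnn hstep3s
    have heq : S * (∑ l ∈ E, r i l * (conj (v i) * v i - conj (v l) * v l))
        = S * S * (conj (v i) * v i) - S * (∑ l ∈ E, r i l * (conj (v l) * v l)) := by
      have e : (∑ l ∈ E, r i l * (conj (v i) * v i - conj (v l) * v l))
          = S * (conj (v i) * v i) - ∑ l ∈ E, r i l * (conj (v l) * v l) := by
        rw [hS, Finset.sum_mul, ← Finset.sum_sub_distrib]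
        exact Finset.sum_congr rfl fun l _ => by ring
      linear_combination S * e
    rwa [heq] at h3
  -- combine everything
  have hcomb := nonnegC_add hstep3 hD
  rw [sub_add_sub_cancel, hu, hstep4] at hcomb
  rw [show S * S * (conj (v i) * v i) - c i * c i * (conj (v i) * v i)
      = (conj (v i) * v i) * (S * S - c i * c i) from by ring] at hcomb
  have h9 : NonnegC (S * S - c i * c i) :=
    nonnegC_of_posC_mul hWi
      (isReal_sub (isReal_mul hSreal hSreal)
        (isReal_mul (nonnegC_isReal (hcnn i)) (nonnegC_isReal (hcnn i)))) hcomb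
  exact leC_of_sq (hcnn i) hSnn h9
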